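/- arXiv:1503.07355 — 4 statements merged into one kernel-verified Lean document; each statement's English description precedes it below -/
import Mathlib

section
/- If a surjective dynamical system (X,T) has the specification property, then for any finite collection of nonempty open sets U_1, …, U_k ⊆ X there exists N ∈ ℕ such that for every n ∈ ℕ and every function φ : {0, 1, …, n} → {1, …, k} there is a point z ∈ X satisfying T^{iN}(z) ∈ U_{φ(i)} for all i = 0, 1, …, n. -/
/-- `y` ε-traces the specification given by orbit segments `T^{[a j, b j]}(x j)`, `j < n`. -/
def Traces {X : Type*} [MetricSpace X] (T : X → X) (y : X) (n : ℕ)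
    (a b : ℕ → ℕ) (x : ℕ → X) (ε : ℝ) : Prop :=
  ∀ j < n, ∀ k, a j ≤ k → k ≤ b j → dist (T^[k] y) (T^[k] (x j)) ≤ ε

/-- The specification property. -/
def SpecProp {X : Type*} [MetricSpace X] (T : X → X) : Prop :=
  ∀ ε : ℝ, 0 < ε → ∃ N : ℕ, 0 < N ∧
    ∀ (n : ℕ) (a b : ℕ → ℕ) (x : ℕ → X),
      (∀ j < n, a j ≤ b j) → (∀ j, j + 1 < n → b j + N ≤ a (j + 1)) →
      ∃ y : X, Traces T y n a b x ε

/-- The periodic specification property. -/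
def PerSpecProp {X : Type*} [MetricSpace X] (T : X → X) : Prop :=
  ∀ ε : ℝ, 0 < ε → ∃ N : ℕ, 0 < N ∧
    ∀ (n : ℕ) (a b : ℕ → ℕ) (x : ℕ → X), 0 < n →
      (∀ j < n, a j ≤ b j) → (∀ j, j + 1 < n → b j + N ≤ a (j + 1)) →
      ∃ y : X, Traces T y n a b x ε ∧ T^[b (n - 1) - a 0 + N] y = y


theorem spec_implies_uniform_hitting {X : Type*} [MetricSpace X] [CompactSpace X]
    (T : X → X) (hT : Continuous T) (hsurj : Function.Surjective T)
    (hspec : SpecProp T) (k : ℕ) (hk : 0 < k) (U : Fin k → Set X)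
    (hUopen : ∀ i, IsOpen (U i)) (hUne : ∀ i, (U i).Nonempty) :
    ∃ N : ℕ, 0 < N ∧ ∀ (n : ℕ) (φ : ℕ → Fin k),
      ∃ z : X, ∀ i ≤ n, T^[i * N] z ∈ U (φ i) := by

  -- choose points and radii
  choose p hp using hUne
  have hr : ∀ i, ∃ r : ℝ, 0 < r ∧ Metric.ball (p i) r ⊆ U i := fun i =>
    Metric.isOpen_iff.mp (hUopen i) (p i) (hp i)
  choose r hrpos hrsub using hr
  have hne : (Finset.univ : Finset (Fin k)).Nonempty := by
    simpa [Finset.univ_nonempty_iff] using Fin.pos_iff_nonempty.mp hk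
  set ε : ℝ := (Finset.univ.inf' hne r) / 2 with hε
  have hεpos : 0 < ε := by
    have : 0 < Finset.univ.inf' hne r := by
      rw [Finset.lt_inf'_iff]; exact fun i _ => hrpos i
    positivity
  obtain ⟨N, hN, hNspec⟩ := hspec ε hεpos
  refine ⟨N, hN, fun n φ => ?_⟩
  have hsurjN : ∀ m : ℕ, Function.Surjective (T^[m]) := fun m =>
    Function.Surjective.iterate hsurj m
  have hx : ∀ j : ℕ, ∃ x : X, T^[j * N] x = p (φ j) := fun j => hsurjN (j * N) _
  choose x hx using hx
  obtain ⟨y, hy⟩ := hNspec (n + 1) (fun j => j * N) (fun j => j * N) x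
    (fun j _ => le_rfl) (fun j _ => by ring_nf; omega)
  refine ⟨y, fun i hi => ?_⟩
  have := hy i (Nat.lt_succ_of_le hi) (i * N) le_rfl le_rfl
  rw [hx i] at this
  apply hrsub (φ i)
  have hεr : ε < r (φ i) := by
    have h1 : Finset.univ.inf' hne r ≤ r (φ i) := Finset.inf'_le _ (Finset.mem_univ _)
    have := hrpos (φ i)
    simp only [hε]; linarith
  exact Metric.mem_ball.mpr (lt_of_le_of_lt this hεr)
end

section
/- Let (X,T) be an invertible expansive dynamical system with the periodic specification property, where X is a nontrivial compact metric space. Then for all sufficiently large n the set Per_n(T) of fixed points of T^n is finite and nonempty, and the topological entropy of T equals the exponential growth rate of the number of periodic points: h_top(T) = lim_{n→∞} (1/n) log |Per_n(T)|. -/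
/-- An invertible system is expansive: some `c > 0` separates distinct full orbits
(over all n ∈ ℤ, encoded via forward iterates of `T` and `T.symm`). -/
def ExpansiveHomeo {X : Type*} [MetricSpace X] (T : X ≃ₜ X) : Prop :=
  ∃ c : ℝ, 0 < c ∧ ∀ x y : X,
    (∀ n : ℕ, dist (T^[n] x) (T^[n] y) < c ∧ dist (T.symm^[n] x) (T.symm^[n] y) < c) →
    x = y

/-!
Expansivity with constant `c` forces distinct points of period `n` to be `(n, c)`-separated, so
`|Per_n|` is at most the maximal size of an `n`-step dynamical net at scale `c / 2`; the
exponential growth rate of the latter is finite by compactness and at most `h_top`.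
Conversely, periodic specification shadows every orbit segment of length `n` by a point of
period `n + N`, and distinct centres of an `ε`-net have distinct shadows, so nets at scale `ε`
are no larger than `Per_{n+N}`; a fixed shift `N` does not change exponential growth rates.
Hence `h_top ≤ liminf (1/n) log |Per_n| ≤ limsup (1/n) log |Per_n| ≤ h_top < ∞`.
-/

open Filter Set Dynamics Function ExpGrowth LinearGrowth
open scoped ENNReal

lemma Dynamics.IsDynNetIn.encard_le_netMaxcard {X : Type*} {T : X → X} {F s : Set X}
    {U : SetRel X X} {n : ℕ} (h : IsDynNetIn T F U n s) :
    s.encard ≤ netMaxcard T F U n := by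
  refine ENat.forall_natCast_le_iff_le.1 fun k hk ↦ ?_
  obtain ⟨t, hts, htk⟩ := exists_subset_encard_eq hk
  have ht : t.Finite := encard_lt_top_iff.1 (htk ▸ ENat.natCast_lt_top k)
  have hnet : IsDynNetIn T F U n ht.toFinset := by
    rw [ht.coe_toFinset]
    exact ⟨hts.trans h.1, h.2.subset hts⟩
  rw [← htk, ht.encard_eq_coe_toFinset_card]
  exact hnet.card_le_netMaxcard

lemma Set.log_encard_eq_log_natCard {α : Type*} {s : Set α} (hs : s.Finite) (hne : s.Nonempty) :
    ENNReal.log (s.encard : ℝ≥0∞) = Real.log (Nat.card s) := by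
  rw [← hs.cast_ncard_eq, ← Nat.card_coe_set_eq, ENat.toENNReal_coe, ← ENNReal.ofReal_natCast,
    ENNReal.log_ofReal_of_pos]
  have := hs.to_subtype
  have := hne.to_subtype
  exact_mod_cast Nat.card_pos

lemma Filter.Tendsto.log_natCard_div {α : Type*} {s : ℕ → Set α}
    (hs : ∀ᶠ n in atTop, (s n).Finite ∧ (s n).Nonempty) {a : ℝ}
    (h : Tendsto (fun n ↦ ENNReal.log ((s n).encard : ℝ≥0∞) / n) atTop (nhds (a : EReal))) :
    Tendsto (fun n ↦ Real.log (Nat.card (s n)) / n) atTop (nhds a) := by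
  rw [← EReal.tendsto_coe]
  refine h.congr' ?_
  filter_upwards [hs] with n ⟨hfin, hne⟩
  rw [Set.log_encard_eq_log_natCard hfin hne, EReal.coe_div]
  rfl

lemma Function.IsPeriodicPt.homeomorph_symm_iterate {X : Type*} [TopologicalSpace X]
    {T : X ≃ₜ X} {n : ℕ} {x : X} (hn : 0 < n) (hx : IsPeriodicPt T n x) (k : ℕ) :
    T.symm^[k] x = T^[(n - 1) * k] x := by
  have hnk : k + (n - 1) * k = n * k := by rw [← one_add_mul, add_tsub_cancel_of_le hn]
  calc T.symm^[k] x = T.symm^[k] (T^[k] (T^[(n - 1) * k] x)) := by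
        rw [← iterate_add_apply, hnk, (hx.mul_const k).eq]
    _ = T^[(n - 1) * k] x := (LeftInverse.iterate T.symm_apply_apply k) _

section Expansive

variable {X : Type*} [MetricSpace X]

def IsExpansiveConst (T : X ≃ₜ X) (c : ℝ) : Prop :=
  ∀ x y : X,
    (∀ n : ℕ, dist (T^[n] x) (T^[n] y) < c ∧ dist (T.symm^[n] x) (T.symm^[n] y) < c) → x = y

namespace IsExpansiveConst

variable {T : X ≃ₜ X} {c : ℝ} {n : ℕ}

lemma eq_of_isPeriodicPt (hT : IsExpansiveConst T c) (hn : 0 < n) {x y : X}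
    (hx : IsPeriodicPt T n x) (hy : IsPeriodicPt T n y)
    (h : ∀ k < n, dist (T^[k] x) (T^[k] y) < c) : x = y := by
  have close (m : ℕ) : dist (T^[m] x) (T^[m] y) < c := by
    rw [← hx.iterate_mod_apply, ← hy.iterate_mod_apply]
    exact h _ (Nat.mod_lt _ hn)
  refine hT x y fun m ↦ ⟨close m, ?_⟩
  rw [hx.homeomorph_symm_iterate hn, hy.homeomorph_symm_iterate hn]
  exact close _

lemma isDynNetIn_ptsOfPeriod (hT : IsExpansiveConst T c) (hn : 0 < n) :
    IsDynNetIn T univ {p | dist p.1 p.2 < c / 2} n (ptsOfPeriod T n) := by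
  refine ⟨subset_univ _, fun x hx y hy hxy ↦ disjoint_left.2 fun z hzx hzy ↦ hxy ?_⟩
  refine hT.eq_of_isPeriodicPt hn hx hy fun k hk ↦ ?_
  have hxz : dist (T^[k] x) (T^[k] z) < c / 2 := (mem_ball_dynEntourage.1 hzx) k hk
  have hyz : dist (T^[k] y) (T^[k] z) < c / 2 := (mem_ball_dynEntourage.1 hzy) k hk
  linarith [dist_triangle_right (T^[k] x) (T^[k] y) (T^[k] z)]

lemma encard_ptsOfPeriod_le_netMaxcard (hT : IsExpansiveConst T c) (hn : 0 < n) :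
    (ptsOfPeriod T n).encard ≤ netMaxcard T univ {p | dist p.1 p.2 < c / 2} n :=
  (hT.isDynNetIn_ptsOfPeriod hn).encard_le_netMaxcard

lemma finite_ptsOfPeriod [CompactSpace X] (hT : IsExpansiveConst T c) (hc : 0 < c)
    (hn : 0 < n) : (ptsOfPeriod T n).Finite := by
  refine encard_lt_top_iff.1 ((hT.encard_ptsOfPeriod_le_netMaxcard hn).trans_lt ?_)
  exact (netMaxcard_le_coverMincard T univ n).trans_lt <|
    coverMincard_finite_of_isCompact_invariant isCompact_univ (mapsTo_univ _ _)
      (Metric.dist_mem_uniformity (half_pos hc)) n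

lemma expGrowthSup_encard_ptsOfPeriod_le (hT : IsExpansiveConst T c) :
    expGrowthSup (fun n ↦ ((ptsOfPeriod T n).encard : ℝ≥0∞)) ≤
      netEntropyEntourage T univ {p | dist p.1 p.2 < c / 2} := by
  refine expGrowthSup_eventually_monotone ?_
  filter_upwards [eventually_gt_atTop 0] with n hn
  exact ENat.toENNReal_le.2 (hT.encard_ptsOfPeriod_le_netMaxcard hn)

end IsExpansiveConst

end Expansive

lemma ExpGrowth.expGrowthInf_le_of_le_comp_add {u v : ℕ → ℝ≥0∞} (hu : 1 ≤ᶠ[atTop] u) {N : ℕ}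
    (h : ∀ n, u n ≤ v (n + N)) : expGrowthInf u ≤ expGrowthInf v := by
  have hlin : (linearGrowthInf fun n ↦ ((n - N : ℕ) : EReal)) = 1 := by
    refine le_antisymm ?_ ?_
    · calc _ ≤ linearGrowthInf fun n : ℕ ↦ (1 : EReal) * n :=
            linearGrowthInf_monotone fun n ↦ by simp
        _ = 1 := linearGrowthInf_const_mul_self
    · calc (1 : EReal) = linearGrowthInf fun n : ℕ ↦ (1 : EReal) * n :=
            linearGrowthInf_const_mul_self.symm
        _ ≤ _ := linearGrowthInf_le_of_eventually_le (b := N) (EReal.coe_ne_top N)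
            (Eventually.of_forall fun n ↦ by
              rw [one_mul]
              exact_mod_cast (by omega : n ≤ n - N + N))
  calc expGrowthInf u = 1 * expGrowthInf u := (one_mul _).symm
    _ ≤ expGrowthInf (u ∘ fun n ↦ n - N) := hlin ▸ le_expGrowthInf_comp hu (tendsto_sub_atTop_nat N)
    _ ≤ expGrowthInf v := expGrowthInf_eventually_monotone <|
        (eventually_ge_atTop N).mono fun n hn ↦ by simpa [Nat.sub_add_cancel hn] using h (n - N)

namespace PerSpecProp

variable {X : Type*} [MetricSpace X] {T : X → X}

lemma eventually_nonempty_ptsOfPeriod [Nonempty X] (hspec : PerSpecProp T) :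
    ∀ᶠ n in atTop, (ptsOfPeriod T n).Nonempty := by
  obtain ⟨N, -, hP⟩ := hspec 1 one_pos
  filter_upwards [eventually_ge_atTop N] with n hn
  obtain ⟨y, -, hy⟩ := hP 1 (fun _ ↦ 0) (fun _ ↦ n - N) (fun _ ↦ Classical.arbitrary X) one_pos
    (by simp) (by simp)
  exact ⟨y, (by simpa [Nat.sub_add_cancel hn] using hy : T^[n] y = y)⟩

lemma exists_periodic_shadow (hspec : PerSpecProp T) {ε : ℝ} (hε : 0 < ε) :
    ∃ N, ∀ n (x : X), ∃ y ∈ ptsOfPeriod T (n + N), ∀ k ≤ n, dist (T^[k] y) (T^[k] x) ≤ ε := by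
  obtain ⟨N, -, hP⟩ := hspec ε hε
  refine ⟨N, fun n x ↦ ?_⟩
  obtain ⟨y, htr, hy⟩ := hP 1 (fun _ ↦ 0) (fun _ ↦ n) (fun _ ↦ x) one_pos (by simp) (by simp)
  exact ⟨y, (by simpa using hy : T^[n + N] y = y), fun k hk ↦ htr 0 one_pos k k.zero_le hk⟩

lemma netMaxcard_le_encard_ptsOfPeriod (hspec : PerSpecProp T) {ε : ℝ} (hε : 0 < ε) :
    ∃ N, ∀ n, netMaxcard T univ {p | dist p.1 p.2 < ε} n ≤ (ptsOfPeriod T (n + N)).encard := by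
  obtain ⟨N, hN⟩ := hspec.exists_periodic_shadow (half_pos hε)
  choose f hf_per hf_close using hN
  refine ⟨N, fun n ↦ iSup₂_le fun s hs ↦ ?_⟩
  have mem_ball (x : X) :
      f n x ∈ UniformSpace.ball x (dynEntourage T {p | dist p.1 p.2 < ε} n) :=
    mem_ball_dynEntourage.2 fun k hk ↦ by
      change dist (T^[k] x) (T^[k] (f n x)) < ε
      linarith [dist_comm (T^[k] x) (T^[k] (f n x)), hf_close n x k hk.le]
  have hinj : InjOn (f n) s := fun x hx y hy hxy ↦
    hs.2.elim_set hx hy (f n x) (mem_ball x) (hxy ▸ mem_ball y)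
  rw [← encard_coe_eq_coe_finsetCard]
  exact encard_le_encard_of_injOn (fun x _ ↦ hf_per n x) hinj

lemma coverEntropy_le_expGrowthInf [Nonempty X] (hspec : PerSpecProp T) :
    coverEntropy T univ ≤ expGrowthInf fun n ↦ ((ptsOfPeriod T n).encard : ℝ≥0∞) := by
  rw [← coverEntropyInf_eq_coverEntropy T (mapsTo_univ _ _),
    coverEntropyInf_eq_iSup_basis_netEntropyInfEntourage Metric.uniformity_basis_dist]
  refine iSup₂_le fun ε hε ↦ ?_
  obtain ⟨N, hN⟩ := hspec.netMaxcard_le_encard_ptsOfPeriod hε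
  refine expGrowthInf_le_of_le_comp_add (Eventually.of_forall fun n ↦ ?_)
    fun n ↦ ENat.toENNReal_le.2 (hN n)
  rw [Pi.one_apply, ← ENat.toENNReal_one, ENat.toENNReal_le]
  exact (one_le_netMaxcard_iff T univ _ n).2 univ_nonempty

end PerSpecProp

open Filter in
theorem entropy_eq_periodic_growth {X : Type*} [MetricSpace X] [CompactSpace X]
    [Nontrivial X] (T : X ≃ₜ X) (hexp : ExpansiveHomeo T)
    (hspec : PerSpecProp (⇑T)) :
    (∃ N₀ : ℕ, ∀ n, N₀ ≤ n →
        {x : X | T^[n] x = x}.Finite ∧ {x : X | T^[n] x = x}.Nonempty) ∧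
    Dynamics.coverEntropy (⇑T) Set.univ ≠ ⊤ ∧
    Tendsto (fun n : ℕ => Real.log (Nat.card {x : X | T^[n] x = x}) / n)
      atTop (nhds (Dynamics.coverEntropy (⇑T) Set.univ).toReal) := by
  obtain ⟨c, hc, hT⟩ := hexp
  have hT : IsExpansiveConst T c := hT
  have hfin : ∀ᶠ n in atTop, (ptsOfPeriod T n).Finite ∧ (ptsOfPeriod T n).Nonempty :=
    ((eventually_gt_atTop 0).mono fun n hn ↦ hT.finite_ptsOfPeriod hc hn).and
      hspec.eventually_nonempty_ptsOfPeriod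
  have hU : {p : X × X | dist p.1 p.2 < c / 2} ∈ uniformity X :=
    Metric.dist_mem_uniformity (half_pos hc)
  have h_lower := hspec.coverEntropy_le_expGrowthInf
  have h_upper := hT.expGrowthSup_encard_ptsOfPeriod_le
  have h_ne_top : coverEntropy T univ ≠ ⊤ :=
    (h_lower.trans_lt <| expGrowthInf_le_expGrowthSup.trans_lt <| h_upper.trans_lt <|
      (netEntropyEntourage_le_coverEntropyEntourage T univ).trans_lt <|
        coverEntropyEntourage_finite_of_isCompact_invariant isCompact_univ (mapsTo_univ _ _) hU).ne
  have h_ne_bot : coverEntropy T univ ≠ ⊥ :=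
    (EReal.bot_lt_zero.trans_le (coverEntropy_nonneg T univ_nonempty)).ne'
  refine ⟨eventually_atTop.1 hfin, h_ne_top, Tendsto.log_natCard_div (s := ptsOfPeriod T) hfin ?_⟩
  rw [EReal.coe_toReal h_ne_top h_ne_bot]
  exact tendsto_of_le_liminf_of_limsup_le h_lower <|
    h_upper.trans (netEntropyEntourage_le_coverEntropy T univ hU)
end

section
/- A dynamical system (X,T) has the relative approximate product structure (i.e., there exists a regular periodic decomposition D = {D_0, …, D_{r−1}} of X such that the restriction of T^r to D_i has the approximate product structure for every i) if and only if (X,T) itself has the approximate product structure. -/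
/-- The shadowing property: every δ-pseudo-orbit is ε-traced by a true orbit. -/
def ShadowingProp {X : Type*} [MetricSpace X] (T : X → X) : Prop :=
  ∀ ε : ℝ, 0 < ε → ∃ δ : ℝ, 0 < δ ∧ ∀ x : ℕ → X,
    (∀ n, dist (T (x n)) (x (n + 1)) < δ) →
    ∃ y : X, ∀ n, dist (x n) (T^[n] y) < ε

/-- Topological transitivity. -/
def TopTransitive {X : Type*} [MetricSpace X] (T : X → X) : Prop :=
  ∀ U V : Set X, IsOpen U → IsOpen V → U.Nonempty → V.Nonempty →
    ∃ n : ℕ, 0 < n ∧ (U ∩ T^[n] ⁻¹' V).Nonempty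

/-- The approximate product property for `T`, relative to a (T-invariant) subset `D`:
for all ε, δ₁, δ₂ > 0 there is N such that for every n ≥ N and every sequence of points
of `D` there are gaps `h` with `h 0 = 0`, `n ≤ h (i+1) - h i ≤ n (1 + δ₂)`, and a point
`y ∈ D` whose orbit ε-traces each orbit segment up to at most `δ₁ n` mistakes.
Taking `D = Set.univ` gives the usual approximate product property. -/
def ApproxProductOn {X : Type*} [MetricSpace X] (T : X → X) (D : Set X) : Prop :=
  ∀ ε : ℝ, 0 < ε → ∀ δ₁ : ℝ, 0 < δ₁ → ∀ δ₂ : ℝ, 0 < δ₂ →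
    ∃ N : ℕ, 0 < N ∧ ∀ n : ℕ, N ≤ n → ∀ x : ℕ → X, (∀ i, x i ∈ D) →
      ∃ h : ℕ → ℕ, h 0 = 0 ∧
        (∀ i, h i + n ≤ h (i + 1) ∧ ((h (i + 1) : ℝ) - (h i : ℝ) ≤ n * (1 + δ₂))) ∧
        ∃ y ∈ D, ∀ i,
          (((Finset.range n).filter
              (fun j => ε < dist (T^[h i + j] y) (T^[j] (x i)))).card : ℝ) ≤ δ₁ * n

/-- A regular periodic decomposition `D 0, …, D (r-1)` of `(X,T)`. -/
def RegPerDecomp {X : Type*} [MetricSpace X] (T : X → X) (r : ℕ) (D : ℕ → Set X) : Prop :=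
  0 < r ∧
  (∀ i < r, D i = closure (interior (D i))) ∧
  (∀ i < r, ∀ j < r, i ≠ j → IsNowhereDense (D i ∩ D j)) ∧
  (∀ i < r, T '' D i ⊆ D ((i + 1) % r)) ∧
  (⋃ i ∈ Finset.range r, D i) = Set.univ

lemma uc_all {X : Type*} [MetricSpace X] [CompactSpace X]
    {T : X → X} (hT : Continuous T) (r : ℕ) {ε : ℝ} (hε : 0 < ε) :
    ∃ δ : ℝ, 0 < δ ∧ ∀ k < r, ∀ a b : X, dist a b < δ → dist (T^[k] a) (T^[k] b) < ε := by
  induction r with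
  | zero => exact ⟨1, one_pos, by omega⟩
  | succ r ih =>
    obtain ⟨δ₀, hδ₀, h₀⟩ := ih
    have huc : UniformContinuous (T^[r]) :=
      CompactSpace.uniformContinuous_of_continuous (hT.iterate r)
    obtain ⟨δ₁, hδ₁, h₁⟩ := Metric.uniformContinuous_iff.mp huc ε hε
    refine ⟨min δ₀ δ₁, lt_min hδ₀ hδ₁, ?_⟩
    intro k hk a b hab
    rcases Nat.lt_succ_iff_lt_or_eq.mp hk with h | h
    · exact h₀ k h a b (hab.trans_le (min_le_left _ _))
    · subst h; exact h₁ (hab.trans_le (min_le_right _ _))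


set_option maxHeartbeats 2000000 in
lemma forward_app {X : Type*} [MetricSpace X] [CompactSpace X]
    (T : X → X) (hT : Continuous T)
    (H0 : ∃ (r : ℕ) (D : ℕ → Set X), RegPerDecomp T r D ∧
        ∀ i < r, ApproxProductOn (T^[r]) (D i)) :
    ApproxProductOn T Set.univ := by
  obtain ⟨r, D, ⟨hr, _, _, hmapD, hcover⟩, hAPP⟩ := H0
  have hmap' : ∀ c q, q < r → ∀ z, z ∈ D q → T^[c] z ∈ D ((q + c) % r) := by
    intro c
    induction c with
    | zero =>
      intro q hq z hz
      simpa [Nat.mod_eq_of_lt hq] using hz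
    | succ c ih =>
      intro q hq z hz
      have h1 : T^[c] z ∈ D ((q + c) % r) := ih q hq z hz
      have h2 : T (T^[c] z) ∈ D (((q + c) % r + 1) % r) :=
        hmapD _ (Nat.mod_lt _ hr) ⟨_, h1, rfl⟩
      have h3 : ((q + c) % r + 1) % r = (q + (c + 1)) % r := by
        rw [Nat.mod_add_mod, ← Nat.add_assoc]
      rw [Function.iterate_succ_apply', ← h3]
      exact h2
  have hcov : ∀ z : X, ∃ q, q < r ∧ z ∈ D q := by
    intro z
    have : z ∈ ⋃ i ∈ Finset.range r, D i := by rw [hcover]; trivial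
    simp only [Set.mem_iUnion, Finset.mem_range] at this
    obtain ⟨q, hq, hz⟩ := this
    exact ⟨q, hq, hz⟩
  intro ε hε δ₁ hδ₁ δ₂ hδ₂
  obtain ⟨δuc, hδuc, huc⟩ := uc_all hT r hε
  set ε'' : ℝ := δuc / 2 with hε''def
  have hε''pos : 0 < ε'' := by positivity
  have hchoice : ∀ p : ℕ, ∃ N : ℕ, 0 < N ∧ (p < r → ∀ n : ℕ, N ≤ n → ∀ x : ℕ → X,
      (∀ i, x i ∈ D p) →
      ∃ h : ℕ → ℕ, h 0 = 0 ∧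
        (∀ i, h i + n ≤ h (i + 1) ∧ ((h (i + 1) : ℝ) - (h i : ℝ) ≤ n * (1 + δ₂ / 2))) ∧
        ∃ y ∈ D p, ∀ i,
          (((Finset.range n).filter
              (fun j => ε'' < dist ((T^[r])^[h i + j] y) ((T^[r])^[j] (x i)))).card : ℝ)
            ≤ δ₁ / 2 * n) := by
    intro p
    by_cases hp : p < r
    · obtain ⟨N, hN, hP⟩ := hAPP p hp ε'' hε''pos (δ₁ / 2) (by positivity) (δ₂ / 2) (by positivity)
      exact ⟨N, hN, fun _ => hP⟩
    · exact ⟨1, one_pos, fun h => absurd h hp⟩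
  choose Nf hNf1 hNf2 using hchoice
  set N₀ : ℕ := (Finset.range r).sup Nf with hN₀def
  set A : ℕ := Nat.ceil ((6 * (r : ℝ) + 2 * r * δ₂) / δ₂) with hAdef
  set B : ℕ := Nat.ceil ((2 * (r : ℝ) + 2 * δ₁ * r) / δ₁) with hBdef
  refine ⟨r * N₀ + A + B + 1, by omega, ?_⟩
  intro n hn x _
  choose jf hjf1 hjf2 using fun i => hcov (x i)
  set p : ℕ := jf 0 with hpdef
  have hp : p < r := hjf1 0
  set c : ℕ → ℕ := fun i => (p + r - jf i) % r with hcdef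
  have hclt : ∀ i, c i < r := fun i => Nat.mod_lt _ hr
  have hc0 : c 0 = 0 := by
    simp only [hcdef, hpdef]
    have e : jf 0 + r - jf 0 = r := by omega
    rw [e, Nat.mod_self]
  set x' : ℕ → X := fun i => T^[c i] (x i) with hx'def
  have hx'mem : ∀ i, x' i ∈ D p := by
    intro i
    have h1 : T^[c i] (x i) ∈ D ((jf i + c i) % r) := hmap' (c i) (jf i) (hjf1 i) _ (hjf2 i)
    have h2 : (jf i + c i) % r = p := by
      have hle : jf i ≤ p + r := by have := hjf1 i; omega
      have e : jf i + (p + r - jf i) = p + r := by omega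
      simp only [hcdef]
      rw [Nat.add_mod_mod, e, Nat.add_mod_right, Nat.mod_eq_of_lt hp]
    rwa [h2] at h1
  -- block length in T^[r]-time
  set m : ℕ := n / r + 2 with hmdef
  have hNm : Nf p ≤ m := by
    have h1 : Nf p ≤ N₀ := Finset.le_sup (Finset.mem_range.mpr hp)
    have h3 : N₀ ≤ n / r := (Nat.le_div_iff_mul_le hr).mpr (by nlinarith [hn])
    omega
  have hdm : r * (n / r) + n % r = n := Nat.div_add_mod n r
  have hmodlt : n % r < r := Nat.mod_lt _ hr
  have hrme : r * m = r * (n / r) + 2 * r := by rw [hmdef]; ring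
  have hrm1 : n + r < r * m := by omega
  have hrm2 : r * m ≤ n + 2 * r := by omega
  obtain ⟨H, hH0, hHgap, y, hyD, htrace⟩ := hNf2 p hp m hNm x' hx'mem
  have hkey : ∀ i, c i ≤ r * H i := by
    intro i
    cases i with
    | zero => rw [hH0, hc0]; omega
    | succ i =>
      have h1 : H i + m ≤ H (i + 1) := (hHgap i).1
      have h3 : r * m ≤ r * H (i + 1) := Nat.mul_le_mul_left r (by omega)
      have h4 := hclt (i + 1)
      omega
  -- inequalities for A and B
  have hAn : A ≤ n := by omega
  have hBn : B ≤ n := by omega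
  have hA' : 6 * (r : ℝ) + 2 * r * δ₂ ≤ n * δ₂ := by
    have h1 : (A : ℝ) ≤ n := by exact_mod_cast hAn
    have h2 : (6 * (r : ℝ) + 2 * r * δ₂) / δ₂ ≤ A := Nat.le_ceil _
    rw [div_le_iff₀ hδ₂] at h2
    have h3 := mul_le_mul_of_nonneg_right h1 hδ₂.le
    linarith
  have hB' : 2 * (r : ℝ) + 2 * δ₁ * r ≤ δ₁ * n := by
    have h1 : (B : ℝ) ≤ n := by exact_mod_cast hBn
    have h2 : (2 * (r : ℝ) + 2 * δ₁ * r) / δ₁ ≤ B := Nat.le_ceil _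
    rw [div_le_iff₀ hδ₁] at h2
    have h3 := mul_le_mul_of_nonneg_right h1 hδ₁.le
    linarith
  have hrm2' : (r : ℝ) * m ≤ n + 2 * r := by exact_mod_cast hrm2
  refine ⟨fun i => r * H i - c i, by simp [hH0, hc0], ?_, y, trivial, ?_⟩
  · intro i
    have hh1 : r * H i - c i + c i = r * H i := Nat.sub_add_cancel (hkey i)
    have hh2 : r * H (i + 1) - c (i + 1) + c (i + 1) = r * H (i + 1) :=
      Nat.sub_add_cancel (hkey (i + 1))
    have hgap1 : H i + m ≤ H (i + 1) := (hHgap i).1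
    have hmul : r * H i + r * m ≤ r * H (i + 1) := by
      have := Nat.mul_le_mul_left r hgap1
      rwa [Nat.mul_add] at this
    constructor
    · show r * H i - c i + n ≤ r * H (i + 1) - c (i + 1)
      have h4 := hclt (i + 1); have h5 := hclt i; omega
    · show ((r * H (i + 1) - c (i + 1) : ℕ) : ℝ) - ((r * H i - c i : ℕ) : ℝ) ≤ n * (1 + δ₂)
      have e1 : ((r * H i - c i : ℕ) : ℝ) = (r : ℝ) * H i - c i := by
        rw [Nat.cast_sub (hkey i)]; push_cast; ring
      have e2 : ((r * H (i + 1) - c (i + 1) : ℕ) : ℝ) = (r : ℝ) * H (i + 1) - c (i + 1) := by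
        rw [Nat.cast_sub (hkey (i + 1))]; push_cast; ring
      rw [e1, e2]
      have hg2 : (H (i + 1) : ℝ) - H i ≤ m * (1 + δ₂ / 2) := (hHgap i).2
      have hg3 : (r : ℝ) * H (i + 1) - r * H i ≤ r * (m * (1 + δ₂ / 2)) := by
        have h := mul_le_mul_of_nonneg_left hg2 (by positivity : (0:ℝ) ≤ r)
        rw [mul_sub] at h
        linarith
      have hprod : (r : ℝ) * (m * (1 + δ₂ / 2)) ≤ ((n : ℝ) + 2 * r) * (1 + δ₂ / 2) := by
        have hpos : (0:ℝ) ≤ 1 + δ₂ / 2 := by positivity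
        calc (r : ℝ) * (m * (1 + δ₂ / 2)) = ((r : ℝ) * m) * (1 + δ₂ / 2) := by ring
          _ ≤ ((n : ℝ) + 2 * r) * (1 + δ₂ / 2) := mul_le_mul_of_nonneg_right hrm2' hpos
      have hcir : (c i : ℝ) < r := by exact_mod_cast hclt i
      have hcip : (0 : ℝ) ≤ c (i + 1) := by positivity
      nlinarith [hg3, hprod, hA', hcir, hcip]
  · intro i
    show (((Finset.range n).filter
        (fun t => ε < dist (T^[r * H i - c i + t] y) (T^[t] (x i)))).card : ℝ) ≤ δ₁ * n
    have hh1 : r * H i - c i + c i = r * H i := Nat.sub_add_cancel (hkey i)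
    set BadS := (Finset.range m).filter
      (fun j => ε'' < dist ((T^[r])^[H i + j] y) ((T^[r])^[j] (x' i))) with hBadSdef
    have htr : (BadS.card : ℝ) ≤ δ₁ / 2 * m := htrace i
    have hsub : (Finset.range n).filter
        (fun t => ε < dist (T^[r * H i - c i + t] y) (T^[t] (x i))) ⊆
        (Finset.range (c i)) ∪
          BadS.biUnion (fun j => Finset.Ico (c i + r * j) (c i + r * j + r)) := by
      intro t ht
      simp only [Finset.mem_filter, Finset.mem_range] at ht
      obtain ⟨htn, htbad⟩ := ht
      rw [Finset.mem_union]
      by_cases htc : t < c i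
      · exact Or.inl (Finset.mem_range.mpr htc)
      · right
        push_neg at htc
        have hdm2 : r * ((t - c i) / r) + (t - c i) % r = t - c i := Nat.div_add_mod _ r
        set j := (t - c i) / r with hjdef
        set k := (t - c i) % r with hkdef
        have hk_lt : k < r := Nat.mod_lt _ hr
        have htu : t = c i + (r * j + k) := by omega
        have hjm : j < m := by
          rw [hjdef, Nat.div_lt_iff_lt_mul hr]
          have : m * r = r * m := Nat.mul_comm m r
          omega
        have hjBad : j ∈ BadS := by
          rw [hBadSdef, Finset.mem_filter]
          refine ⟨Finset.mem_range.mpr hjm, ?_⟩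
          by_contra hgood
          push_neg at hgood
          have hdlt : dist ((T^[r])^[H i + j] y) ((T^[r])^[j] (x' i)) < δuc :=
            lt_of_le_of_lt hgood (by rw [hε''def]; linarith)
          have hclose := huc k hk_lt _ _ hdlt
          have hma : r * (H i + j) = r * H i + r * j := Nat.mul_add r _ _
          have idx1 : r * H i - c i + t = k + r * (H i + j) := by omega
          have idx2 : t = k + (r * j + c i) := by omega
          have e1 : T^[r * H i - c i + t] y = T^[k] ((T^[r])^[H i + j] y) := by
            rw [idx1, Function.iterate_add_apply, Function.iterate_mul]
          have e2 : T^[t] (x i) = T^[k] ((T^[r])^[j] (x' i)) := by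
            simp only [hx'def]
            rw [idx2, Function.iterate_add_apply, Function.iterate_add_apply,
              Function.iterate_mul]
          rw [e1, e2] at htbad
          linarith
        rw [Finset.mem_biUnion]
        refine ⟨j, hjBad, Finset.mem_Ico.mpr ⟨by omega, by omega⟩⟩
    have hcard : ((Finset.range n).filter
        (fun t => ε < dist (T^[r * H i - c i + t] y) (T^[t] (x i)))).card ≤
        c i + BadS.card * r := by
      refine le_trans (Finset.card_le_card hsub) ?_
      refine le_trans (Finset.card_union_le _ _) ?_
      have h1 : (BadS.biUnion (fun j => Finset.Ico (c i + r * j) (c i + r * j + r))).card ≤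
          BadS.card * r := by
        refine le_trans (Finset.card_biUnion_le) ?_
        have : ∀ j ∈ BadS, (Finset.Ico (c i + r * j) (c i + r * j + r)).card = r := by
          intro j _
          rw [Nat.card_Ico]
          omega
        rw [Finset.sum_congr rfl this, Finset.sum_const, smul_eq_mul]
      have h2 : (Finset.range (c i)).card = c i := Finset.card_range _
      omega
    have hcardR : (((Finset.range n).filter
        (fun t => ε < dist (T^[r * H i - c i + t] y) (T^[t] (x i)))).card : ℝ) ≤
        (c i : ℝ) + (BadS.card : ℝ) * r := by exact_mod_cast hcard
    have hcir : (c i : ℝ) < r := by exact_mod_cast hclt i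
    have hmr : (BadS.card : ℝ) * r ≤ (δ₁ / 2 * m) * r :=
      mul_le_mul_of_nonneg_right htr (by positivity)
    have hmr2 : (δ₁ / 2 * (m : ℝ)) * r ≤ δ₁ / 2 * ((n : ℝ) + 2 * r) := by
      calc (δ₁ / 2 * (m : ℝ)) * r = δ₁ / 2 * ((r : ℝ) * m) := by ring
        _ ≤ δ₁ / 2 * ((n : ℝ) + 2 * r) := by
            exact mul_le_mul_of_nonneg_left hrm2' (by positivity)
    linarith

theorem relative_approx_product_iff {X : Type*} [MetricSpace X] [CompactSpace X]
    (T : X → X) (hT : Continuous T) :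
    (∃ (r : ℕ) (D : ℕ → Set X), RegPerDecomp T r D ∧
        ∀ i < r, ApproxProductOn (T^[r]) (D i)) ↔
    ApproxProductOn T Set.univ := by
  constructor
  · exact forward_app T hT
  · intro hAPP
    refine ⟨1, fun _ => Set.univ, ⟨one_pos, ?_, ?_, ?_, ?_⟩, ?_⟩
    · intro i _; simp
    · intro i hi j hj hij; omega
    · intro i _; simp
    · simp
    · intro i _
      simpa [Function.iterate_one] using hAPP
end

section
/- Let (X,T) be a dynamical system admitting a regular periodic decomposition D = {D_0, …, D_{r−1}} such that for every i the restriction of T^r to D_i has the weak specification property (or, alternatively, such that for every i the restriction of T^r to D_i has the approximate product structure obtained from almost specification — more generally, any property implying the approximate product structure of T^r on each D_i). Then (X,T) has the approximate product property. In particular, if each T^r|_{D_i} has the weak specification property, then (X,T) has the approximate product property. -/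
/-- The weak specification property for `T` relative to a (T-invariant) subset `D`:
specifications consisting of points of `D`, with gaps at least `M ε` of the length of the
following segment (`M ε` nondecreasing and sublinear), are ε-traced by points of `D`. -/
def WeakSpecOn {X : Type*} [MetricSpace X] (T : X → X) (D : Set X) : Prop :=
  ∀ ε : ℝ, 0 < ε → ∃ M : ℕ → ℕ, Monotone M ∧
    Filter.Tendsto (fun n : ℕ => (M n : ℝ) / n) Filter.atTop (nhds 0) ∧
    ∀ (n : ℕ) (a b : ℕ → ℕ) (x : ℕ → X),
      (∀ j < n, x j ∈ D) → (∀ j < n, a j ≤ b j) →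
      (∀ j, j + 1 < n →
        b j < a (j + 1) ∧ b j + M (b (j + 1) - a (j + 1) + 1) ≤ a (j + 1)) →
      ∃ y ∈ D, ∀ j < n, ∀ k, a j ≤ k → k ≤ b j →
        dist (T^[k] y) (T^[k] (x j)) ≤ ε

/-!
On a closed `S`-invariant subset `E` of a compact space, weak specification gives the approximate
product property: the orbit segments are cut into blocks of length `m`, separated by gaps of
length `M m = o(m)`, and only the gaps carry mistakes. Weak specification traces `S^k x` at the
same times `k`, so each block is replaced by a point of `E` whose orbit passes near it at the
prescribed time; such points exist because the compact sets `S^t '' E` decrease to a set on which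
`S` is onto. Infinitely many segments are then handled by compactness.

For the decomposition, every point is moved by fewer than `r` steps of `T` into the piece
`D c₀` containing the first point. The approximate product property of `T^r` on `D c₀` then gives
that of `T`: by uniform continuity of `T, …, T^r`, a time at which `T^r` traces within `η` is
followed by `r` times at which `T` traces within `ε`.
-/

open Filter Metric Set Topology

namespace Nat

variable (Q : ℕ → Prop) [DecidablePred Q]

theorem count_mul_eq_sum (p L : ℕ) :
    count Q (p * L) = ∑ l ∈ Finset.range L, count (fun s => Q (p * l + s)) p := by
  induction L with
  | zero => simp
  | succ L ih => rw [Nat.mul_succ, count_add, ih, Finset.sum_range_succ]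

variable {Q}

theorem count_le_sub_of_forall_lt {m p : ℕ} (h : ∀ s < m, ¬ Q s) : count Q p ≤ p - m := by
  calc count Q p ≤ count (m ≤ ·) p := count_mono_left fun s _ hs => not_lt.1 fun hsm => h s hsm hs
    _ = p - m := by
      rw [count_eq_card_filter_range, Finset.range_eq_Ico, Finset.Ico_filter_le, Nat.card_Ico,
        max_eq_right (Nat.zero_le m)]

theorem count_mul_le_of_forall_lt {p m L : ℕ} (h : ∀ l < L, ∀ s < m, ¬ Q (p * l + s)) :
    count Q (p * L) ≤ L * (p - m) := by
  rw [count_mul_eq_sum]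
  calc _ ≤ ∑ _l ∈ Finset.range L, (p - m) :=
        Finset.sum_le_sum fun l hl => count_le_sub_of_forall_lt (h l (Finset.mem_range.1 hl))
    _ = L * (p - m) := by simp

theorem count_mul_le_mul_count {Q' : ℕ → Prop} [DecidablePred Q'] {p L : ℕ}
    (h : ∀ l < L, ¬ Q' l → ∀ s < p, ¬ Q (p * l + s)) : count Q (p * L) ≤ p * count Q' L := by
  rw [count_mul_eq_sum, count_eq_card_filter_range, Finset.card_filter, Finset.mul_sum]
  refine Finset.sum_le_sum fun l hl => ?_
  by_cases hl' : Q' l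
  · simpa [hl'] using count_le _
  · simpa [hl'] using count_le_sub_of_forall_lt (p := p) (h l (Finset.mem_range.1 hl) hl')

end Nat

theorem Nat.exists_ge_mul_mem_Ioc {r N n : ℕ} (hr : 0 < r) (hN : r * N ≤ n) :
    ∃ m, N ≤ m ∧ m ≤ n + 2 ∧ n + r < r * m ∧ r * m ≤ n + 2 * r := by
  refine ⟨n / r + 2, ?_, by have := Nat.div_le_self n r; omega, ?_, ?_⟩
  · have := (Nat.le_div_iff_mul_le hr).2 (mul_comm r N ▸ hN)
    omega
  · have := Nat.lt_mul_div_succ n hr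
    rw [Nat.mul_add, Nat.mul_one] at this
    rw [Nat.mul_add]
    omega
  · have := Nat.mul_div_le n r
    rw [Nat.mul_add]
    omega

theorem mul_sub_gaps {r m n : ℕ} {δ : ℝ} (hδ : 0 < δ) (hnm : n + r < r * m)
    (hmn : r * m ≤ n + 2 * r) (hn : 3 * r + r * δ ≤ δ / 2 * n) {h v : ℕ → ℕ} (h0 : h 0 = 0)
    (hv0 : v 0 = 0) (hvr : ∀ i, v i < r)
    (hgap : ∀ i, h i + m ≤ h (i + 1) ∧ (h (i + 1) : ℝ) - h i ≤ m * (1 + δ / 2)) (i : ℕ) :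
    v i ≤ r * h i ∧ r * h i - v i + n ≤ r * h (i + 1) - v (i + 1) ∧
      ((r * h (i + 1) - v (i + 1) : ℕ) : ℝ) - ((r * h i - v i : ℕ) : ℝ) ≤ n * (1 + δ) := by
  have hrgap : ∀ i, r * h i + r * m ≤ r * h (i + 1) := fun i => by
    rw [← Nat.mul_add]
    exact Nat.mul_le_mul_left r (hgap i).1
  have hvh : ∀ i, v i ≤ r * h i := by
    rintro (_ | i)
    · simp [h0, hv0]
    · have := hrgap i
      have := hvr (i + 1)
      omega
  refine ⟨hvh i, by have := hrgap i; have := hvr (i + 1); omega, ?_⟩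
  have hmn' : (r : ℝ) * m ≤ n + 2 * r := by exact_mod_cast hmn
  have hv : (v i : ℝ) ≤ r := by exact_mod_cast (hvr i).le
  rw [Nat.cast_sub (hvh _), Nat.cast_sub (hvh _)]
  push_cast
  nlinarith [mul_le_mul_of_nonneg_left (hgap i).2 (Nat.cast_nonneg (α := ℝ) r),
    mul_le_mul_of_nonneg_right hmn' (by positivity : (0 : ℝ) ≤ 1 + δ / 2),
    Nat.cast_nonneg (α := ℝ) (v (i + 1))]

theorem UniformContinuous.exists_forall_dist_iterate_le {X : Type*} [PseudoMetricSpace X]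
    {S : X → X} (hS : UniformContinuous S) {ε : ℝ} (hε : 0 < ε) (L : ℕ) :
    ∃ δ > 0, ∀ a b : X, dist a b ≤ δ → ∀ q ≤ L, dist (S^[q] a) (S^[q] b) ≤ ε := by
  have hU : UniformContinuous fun x (q : Fin (L + 1)) => S^[q] x :=
    uniformContinuous_pi.2 fun q => UniformContinuous.iterate S q hS
  obtain ⟨δ, hδ, hU⟩ := Metric.uniformContinuous_iff.1 hU ε hε
  exact ⟨δ / 2, half_pos hδ, fun a b hab q hq =>
    ((dist_pi_lt_iff hε).1 (hU (by linarith)) ⟨q, by omega⟩).le⟩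

theorem IsCompact.exists_mem_forall_of_forall_lt {X : Type*} [TopologicalSpace X] {E : Set X}
    (hE : IsCompact E) {C : ℕ → Set X} (hC : ∀ k, IsClosed (C k))
    (h : ∀ K, ∃ y ∈ E, ∀ k < K, y ∈ C k) : ∃ y ∈ E, ∀ k, y ∈ C k := by
  obtain ⟨y, hyE, hy⟩ := hE.inter_iInter_nonempty C hC fun u => by
    obtain ⟨y, hyE, hy⟩ := h (u.sup id + 1)
    exact ⟨y, hyE, mem_iInter₂.2 fun k hk => hy k (Nat.lt_succ_of_le (u.le_sup (f := id) hk))⟩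
  exact ⟨y, hyE, mem_iInter.1 hy⟩

section MetricSpace

variable {X : Type*} [MetricSpace X]

section Invariant

variable {S : X → X} {E : Set X}

theorem IsCompact.exists_late_iterate_near_iterate (hE : IsCompact E) (hS : Continuous S)
    (hSE : MapsTo S E E) {δ : ℝ} (hδ : 0 < δ) :
    ∃ J, ∀ x ∈ E, ∀ s ≥ J, ∀ t, ∃ w ∈ E, dist (S^[t] w) (S^[s] x) < δ := by
  have hanti : Antitone fun t => S^[t] '' E := antitone_nat_of_succ_le fun t => by
    rw [Function.iterate_succ, image_comp]
    exact image_mono hSE.image_subset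
  have hcpt : ∀ t, IsCompact (S^[t] '' E) := fun t => hE.image (hS.iterate t)
  obtain ⟨J, hJ⟩ := exists_subset_nhds_of_isCompact' hanti.directed_ge hcpt
    (fun t => (hcpt t).isClosed) fun x hx =>
      isOpen_thickening.mem_nhds (self_subset_thickening hδ _ hx)
  refine ⟨J, fun x hx s hs t => ?_⟩
  obtain ⟨v, hv, hxv⟩ := mem_thickening_iff.1 (hJ (hanti hs ⟨x, hx, rfl⟩))
  obtain ⟨w, hw, rfl⟩ := mem_iInter.1 hv t
  exact ⟨w, hw, dist_comm (S^[s] x) _ ▸ hxv⟩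

theorem WeakSpecOn.exists_trace_blocks (hws : WeakSpecOn S E) {ε : ℝ} (hε : 0 < ε) :
    ∃ M : ℕ → ℕ, Tendsto (fun n : ℕ => (M n : ℝ) / n) atTop (𝓝 0) ∧
      ∀ m p t₀ K : ℕ, 0 < m → m + M m ≤ p → ∀ x : ℕ → X, (∀ k, x k ∈ E) →
        ∃ y ∈ E, ∀ k < K, ∀ q < m,
          dist (S^[t₀ + p * k + q] y) (S^[t₀ + p * k + q] (x k)) ≤ ε := by
  obtain ⟨M, -, hM, hspec⟩ := hws ε hε
  refine ⟨M, hM, fun m p t₀ K hm hp x hx => ?_⟩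
  have hlen : ∀ k, t₀ + p * k + (m - 1) - (t₀ + p * k) + 1 = m := fun k => by omega
  obtain ⟨y, hyE, hy⟩ := hspec K (fun k => t₀ + p * k) (fun k => t₀ + p * k + (m - 1)) x
    (fun k _ => hx k) (fun k _ => by omega) fun k _ => by
      rw [hlen, Nat.mul_succ]
      omega
  exact ⟨y, hyE, fun k hk q hq => hy k hk _ (by omega) (by omega)⟩

theorem WeakSpecOn.exists_trace_periodic_blocks (hws : WeakSpecOn S E) (hS : Continuous S)
    (hE : IsCompact E) {ε : ℝ} (hε : 0 < ε) :
    ∃ M : ℕ → ℕ, Tendsto (fun n : ℕ => (M n : ℝ) / n) atTop (𝓝 0) ∧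
      ∀ m p t₀ : ℕ, 0 < m → m + M m ≤ p → ∀ x : ℕ → X, (∀ k, x k ∈ E) →
        ∃ y ∈ E, ∀ k, ∀ q < m, dist (S^[t₀ + p * k + q] y) (S^[t₀ + p * k + q] (x k)) ≤ ε := by
  obtain ⟨M, hM, hblocks⟩ := hws.exists_trace_blocks hε
  refine ⟨M, hM, fun m p t₀ hm hp x hx => ?_⟩
  refine hE.exists_mem_forall_of_forall_lt (C := fun k => {y | ∀ q < m,
    dist (S^[t₀ + p * k + q] y) (S^[t₀ + p * k + q] (x k)) ≤ ε}) (fun k => ?_)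
    fun K => hblocks m p t₀ K hm hp x hx
  simp only [ofPred_forall]
  exact isClosed_biInter fun q _ =>
    isClosed_le ((hS.iterate _).dist continuous_const) continuous_const

theorem WeakSpecOn.exists_trace_segments [CompactSpace X] (hws : WeakSpecOn S E)
    (hS : Continuous S) (hE : IsClosed E) (hSE : MapsTo S E E) {ε : ℝ} (hε : 0 < ε) :
    ∃ M : ℕ → ℕ, Tendsto (fun n : ℕ => (M n : ℝ) / n) atTop (𝓝 0) ∧
      ∀ m, 0 < m → ∃ J, ∀ p L, m + M m ≤ p → ∀ x : ℕ → X, (∀ i, x i ∈ E) →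
        ∃ y ∈ E, ∀ i, ∀ l < L, ∀ s < m,
          dist (S^[p * L * i + (J + (p * l + s))] y) (S^[J + (p * l + s)] (x i)) ≤ ε := by
  obtain ⟨M, hM, hblocks⟩ := hws.exists_trace_periodic_blocks hS hE.isCompact (half_pos hε)
  refine ⟨M, hM, fun m hm => ?_⟩
  obtain ⟨δ, hδ, hδS⟩ :=
    (CompactSpace.uniformContinuous_of_continuous hS).exists_forall_dist_iterate_le (half_pos hε) m
  obtain ⟨J, hJ⟩ := hE.isCompact.exists_late_iterate_near_iterate hS hSE hδ
  refine ⟨J, fun p L hp x hx => ?_⟩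
  -- `w k` is followed along block `k % L` of segment `k / L`, and reaches it at time `J + p * k`.
  -- `w k` follows block `k % L` of segment `k / L`, reaching it at time `J + p * k`.
  choose w hwE hw using fun k => hJ (x (k / L)) (hx _) (J + p * (k % L)) (by omega) (J + p * k)
  obtain ⟨y, hyE, hy⟩ := hblocks m p J hm hp w hwE
  refine ⟨y, hyE, fun i l hl s hs => ?_⟩
  set k := L * i + l
  have hk : k / L = i ∧ k % L = l := by
    refine ⟨?_, ?_⟩
    · rw [Nat.mul_add_div (by omega), Nat.div_eq_of_lt hl, add_zero]
    · rw [Nat.mul_add_mod, Nat.mod_eq_of_lt hl]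
  have hwk : dist (S^[J + p * k] (w k)) (S^[J + p * l] (x i)) ≤ δ := by
    simpa only [hk] using (hw k).le
  have hfar : dist (S^[J + p * k + s] (w k)) (S^[J + p * l + s] (x i)) ≤ ε / 2 := by
    have := hδS _ _ hwk s hs.le
    rwa [← Function.iterate_add_apply, ← Function.iterate_add_apply, add_comm s, add_comm s] at this
  calc dist (S^[p * L * i + (J + (p * l + s))] y) (S^[J + (p * l + s)] (x i))
      = dist (S^[J + p * k + s] y) (S^[J + p * l + s] (x i)) := by
        rw [show p * L * i + (J + (p * l + s)) = J + p * k + s by ring, ← add_assoc]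
    _ ≤ dist (S^[J + p * k + s] y) (S^[J + p * k + s] (w k))
        + dist (S^[J + p * k + s] (w k)) (S^[J + p * l + s] (x i)) := dist_triangle _ _ _
    _ ≤ ε / 2 + ε / 2 := add_le_add (hy k s hs) hfar
    _ = ε := add_halves ε

theorem WeakSpecOn.approxProductOn [CompactSpace X] (hws : WeakSpecOn S E) (hS : Continuous S)
    (hE : IsClosed E) (hSE : MapsTo S E E) : ApproxProductOn S E := by
  intro ε hε δ₁ hδ₁ δ₂ hδ₂
  obtain ⟨M, hM, hseg⟩ := hws.exists_trace_segments hS hE hSE hε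
  obtain ⟨m, hMm, hm⟩ :=
    ((hM.eventually (gt_mem_nhds (half_pos hδ₁))).and (eventually_gt_atTop 0)).exists
  replace hMm : (M m : ℝ) ≤ δ₁ / 2 * m := ((div_lt_iff₀ (by positivity)).1 hMm).le
  obtain ⟨J, hJ⟩ := hseg m hm
  set p := m + M m
  obtain ⟨N, hN⟩ := eventually_atTop.1
    (((tendsto_natCast_atTop_atTop.const_mul_atTop (half_pos hδ₁)).eventually_ge_atTop
      (J + δ₁ / 2 * p)).and
    ((tendsto_natCast_atTop_atTop.const_mul_atTop hδ₂).eventually_ge_atTop (p : ℝ)))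
  refine ⟨N + 1, N.succ_pos, fun n hn x hx => ?_⟩
  obtain ⟨hnJ, hnp⟩ := hN n (by omega)
  obtain ⟨L, hnL, hpL⟩ : ∃ L, n < p * L ∧ p * L ≤ n + p :=
    ⟨n / p + 1, Nat.lt_mul_div_succ n (by omega),
      by rw [Nat.mul_succ]; exact Nat.add_le_add_right (Nat.mul_div_le n p) p⟩
  have hLm : (L : ℝ) * m ≤ n + p := by
    exact_mod_cast (Nat.mul_le_mul_left L (Nat.le_add_right m (M m))).trans (mul_comm L p ▸ hpL)
  obtain ⟨y, hyE, hy⟩ := hJ p L le_rfl x hx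
  refine ⟨fun i => p * L * i, by simp, fun i => ⟨?_, ?_⟩, y, hyE, fun i => ?_⟩
  · show p * L * i + n ≤ p * L * (i + 1)
    rw [mul_add, mul_one]
    omega
  · have : ((p * L : ℕ) : ℝ) ≤ n + p := by exact_mod_cast hpL
    show ((p * L * (i + 1) : ℕ) : ℝ) - ((p * L * i : ℕ) : ℝ) ≤ n * (1 + δ₂)
    push_cast at this ⊢
    linarith
  · set bad : ℕ → Prop := fun j => ε < dist (S^[p * L * i + j] y) (S^[j] (x i))
    rw [← Nat.count_eq_card_filter_range]
    have hcount : Nat.count bad n ≤ J + L * M m := calc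
      Nat.count bad n ≤ Nat.count bad (J + p * L) := Nat.count_monotone _ (by omega)
      _ = Nat.count bad J + Nat.count (fun j => bad (J + j)) (p * L) := Nat.count_add _ _ _
      _ ≤ J + L * M m := add_le_add (Nat.count_le _) <| by
        simpa [p] using Nat.count_mul_le_of_forall_lt (Q := fun j => bad (J + j)) (m := m)
          fun l hl s hs => not_lt.2 (hy i l hl s hs)
    have : (Nat.count bad n : ℝ) ≤ J + L * M m := by exact_mod_cast hcount
    nlinarith

end Invariant

theorem count_lt_dist_iterate_le {S : X → X} {ε η : ℝ} {r : ℕ}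
    (hS : ∀ a b : X, dist a b ≤ η → ∀ q ≤ r, dist (S^[q] a) (S^[q] b) ≤ ε) (y b : X)
    {t v h : ℕ} (hth : t + v = r * h) (m : ℕ) :
    Nat.count (fun j => ε < dist (S^[t + j] y) (S^[j] b)) (v + r * m) ≤
      v + r * Nat.count (fun q => η < dist ((S^[r])^[h + q] y) ((S^[r])^[q] (S^[v] b))) m := by
  rw [Nat.count_add]
  refine add_le_add (Nat.count_le _) (Nat.count_mul_le_mul_count fun l _ hl s hs => not_lt.2 ?_)
  have e₁ : S^[t + (v + (r * l + s))] y = S^[s] ((S^[r])^[h + l] y) := by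
    rw [← Function.iterate_mul, ← Function.iterate_add_apply, mul_add]
    congr 1
    omega
  have e₂ : S^[v + (r * l + s)] b = S^[s] ((S^[r])^[l] (S^[v] b)) := by
    rw [← Function.iterate_mul, ← Function.iterate_add_apply, ← Function.iterate_add_apply]
    congr 1
    omega
  rw [e₁, e₂]
  exact hS _ _ (not_lt.1 hl) s hs.le

namespace RegPerDecomp

variable {T : X → X} {r : ℕ} {D : ℕ → Set X}

theorem isClosed (hdec : RegPerDecomp T r D) {i : ℕ} (hi : i < r) : IsClosed (D i) :=
  hdec.2.1 i hi ▸ isClosed_closure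

theorem exists_mem (hdec : RegPerDecomp T r D) (x : X) : ∃ c < r, x ∈ D c := by
  have hx : x ∈ ⋃ i ∈ Finset.range r, D i := hdec.2.2.2.2 ▸ mem_univ x
  simpa using hx

theorem mapsTo_iterate (hdec : RegPerDecomp T r D) {i : ℕ} (hi : i < r) (t : ℕ) :
    MapsTo T^[t] (D i) (D ((i + t) % r)) := by
  induction t with
  | zero => simpa [Nat.mod_eq_of_lt hi] using mapsTo_id (D i)
  | succ t ih =>
    have hstep := hdec.2.2.2.1 _ (Nat.mod_lt (i + t) hdec.1)
    rw [Nat.mod_add_mod] at hstep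
    rw [Function.iterate_succ', ← add_assoc]
    exact (mapsTo_iff_image_subset.2 hstep).comp ih

theorem mapsTo_iterate_period (hdec : RegPerDecomp T r D) {i : ℕ} (hi : i < r) :
    MapsTo T^[r] (D i) (D i) := by
  simpa [Nat.mod_eq_of_lt hi] using hdec.mapsTo_iterate hi r

theorem mapsTo_iterate_to (hdec : RegPerDecomp T r D) {c c₀ : ℕ} (hc : c < r) (hc₀ : c₀ < r) :
    MapsTo T^[(c₀ + r - c) % r] (D c) (D c₀) := by
  have := hdec.mapsTo_iterate hc ((c₀ + r - c) % r)
  rwa [Nat.add_mod_mod, show c + (c₀ + r - c) = c₀ + r by omega, Nat.add_mod_right,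
    Nat.mod_eq_of_lt hc₀] at this

theorem exists_shift_mem (hdec : RegPerDecomp T r D) (x : ℕ → X) :
    ∃ c₀ < r, ∃ v : ℕ → ℕ, v 0 = 0 ∧ (∀ i, v i < r) ∧ ∀ i, T^[v i] (x i) ∈ D c₀ := by
  choose c hcr hxc using fun i => hdec.exists_mem (x i)
  exact ⟨c 0, hcr 0, fun i => (c 0 + r - c i) % r, by simp, fun i => Nat.mod_lt _ hdec.1,
    fun i => hdec.mapsTo_iterate_to (hcr i) (hcr 0) (hxc i)⟩

theorem approxProductOn_univ (hdec : RegPerDecomp T r D) (hT : UniformContinuous T)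
    (happ : ∀ i < r, ApproxProductOn T^[r] (D i)) : ApproxProductOn T univ := by
  intro ε hε δ₁ hδ₁ δ₂ hδ₂
  have hr : (0 : ℝ) < r := Nat.cast_pos.2 hdec.1
  obtain ⟨η, hη, hηT⟩ := hT.exists_forall_dist_iterate_le hε r
  choose! N _ hN using fun c (hc : c < r) =>
    happ c hc η hη (δ₁ / (2 * r)) (by positivity) (δ₂ / 2) (half_pos hδ₂)
  obtain ⟨N₀, hN₀⟩ := eventually_atTop.1 <|
    (eventually_ge_atTop (r * (Finset.range r).sup N)).and <|
    ((tendsto_natCast_atTop_atTop.const_mul_atTop (half_pos hδ₁)).eventually_ge_atTop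
      (r + δ₁)).and
    ((tendsto_natCast_atTop_atTop.const_mul_atTop (half_pos hδ₂)).eventually_ge_atTop
      (3 * r + r * δ₂))
  refine ⟨N₀ + 1, N₀.succ_pos, fun n hn x _ => ?_⟩
  obtain ⟨hnN, hnδ₁, hnδ₂⟩ := hN₀ n (by omega)
  obtain ⟨c₀, hc₀, v, hv0, hvr, hxv⟩ := hdec.exists_shift_mem x
  obtain ⟨m, hmN, hm, hnm, hmn⟩ := Nat.exists_ge_mul_mem_Ioc hdec.1
    ((Nat.mul_le_mul_left r (Finset.le_sup (Finset.mem_range.2 hc₀))).trans hnN)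
  obtain ⟨h, h0, hgap, y, -, hy⟩ := hN c₀ hc₀ m hmN (fun i => T^[v i] (x i)) hxv
  have hgaps := mul_sub_gaps hδ₂ hnm hmn hnδ₂ h0 hv0 hvr hgap
  refine ⟨fun i => r * h i - v i, by simp [h0, hv0], fun i => (hgaps i).2, y, mem_univ y,
    fun i => ?_⟩
  set far := fun q => η < dist ((T^[r])^[h i + q] y) ((T^[r])^[q] (T^[v i] (x i)))
  have hfar := hy i
  rw [← Nat.count_eq_card_filter_range] at hfar ⊢
  have hcount := (Nat.count_monotone _ (show n ≤ v i + r * m by omega)).trans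
    (count_lt_dist_iterate_le hηT y (x i) (Nat.sub_add_cancel (hgaps i).1) m)
  have hm' : (m : ℝ) ≤ n + 2 := by exact_mod_cast hm
  calc (Nat.count _ n : ℝ) ≤ v i + r * Nat.count far m := by exact_mod_cast hcount
    _ ≤ r + r * (δ₁ / (2 * r) * m) :=
      add_le_add (by exact_mod_cast (hvr i).le) (mul_le_mul_of_nonneg_left hfar hr.le)
    _ = r + δ₁ / 2 * m := by field_simp
    _ ≤ δ₁ * n := by nlinarith

end RegPerDecomp

end MetricSpace

theorem relative_weak_spec_implies_approx_product {X : Type*} [MetricSpace X]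
    [CompactSpace X] (T : X → X) (hT : Continuous T)
    (r : ℕ) (D : ℕ → Set X) (hdec : RegPerDecomp T r D)
    (h : (∀ i < r, WeakSpecOn (T^[r]) (D i)) ∨ (∀ i < r, ApproxProductOn (T^[r]) (D i))) :
    ApproxProductOn T Set.univ := by
  refine hdec.approxProductOn_univ (CompactSpace.uniformContinuous_of_continuous hT) ?_
  rcases h with hws | happ
  · exact fun i hi => (hws i hi).approxProductOn (hT.iterate r) (hdec.isClosed hi)
      (hdec.mapsTo_iterate_period hi)
  · exact happ
end
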